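/- Let a, b > 0 be real numbers. Then a·log(a/(a+b)) + b·log(b/(a+b)) ≥ −(a + b)·log 2, with equality if and only if a = b. (This is the pointwise inequality which, integrated over the joint space, shows that the GAN value function at the optimal discriminator equals −log 4 plus twice the Jensen–Shannon divergence and is minimized exactly when the encoder joint distribution q(x,z) matches the generator joint distribution p(x,z), i.e., the 'if and only if' in Theorem 1.) -/

import Mathlib

/-!
With `m = (a + b) / 2`, the left-hand side plus `(a + b) log 2` equals
`a log (a / m) + b log (b / m)`. Each term dominates `a - m`, resp. `b - m` (from `log x ≤ x - 1`),
strictly unless `a = m`, resp. `b = m`, and these lower bounds sum to `0`.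
-/

open Real

lemma sub_lt_mul_log_div {a c : ℝ} (ha : 0 < a) (hc : 0 < c) (hne : a ≠ c) :
    a - c < a * log (a / c) := by
  have hca : c / a ≠ 1 := by rwa [Ne, div_eq_one_iff_eq ha.ne', eq_comm]
  calc a - c = -(a * (c / a - 1)) := by field_simp; ring
    _ < -(a * log (c / a)) := by gcongr; exact log_lt_sub_one_of_pos (div_pos hc ha) hca
    _ = a * log (a / c) := by rw [← inv_div a c, log_inv]; ring

lemma sub_le_mul_log_div {a c : ℝ} (ha : 0 < a) (hc : 0 < c) : a - c ≤ a * log (a / c) := by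
  rcases eq_or_ne a c with rfl | hne
  · simp [div_self ha.ne']
  · exact (sub_lt_mul_log_div ha hc hne).le

lemma mul_log_div_add_eq_mul_log_div_midpoint {a b : ℝ} (ha : 0 < a) (hb : 0 < b) :
    a * log (a / (a + b)) + b * log (b / (a + b)) =
      a * log (a / ((a + b) / 2)) + b * log (b / ((a + b) / 2)) - (a + b) * log 2 := by
  have hab : a + b ≠ 0 := by positivity
  simp only [div_div_eq_mul_div, log_div (by positivity : a * 2 ≠ 0) hab,
    log_div (by positivity : b * 2 ≠ 0) hab, log_mul ha.ne' two_ne_zero,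
    log_mul hb.ne' two_ne_zero, log_div ha.ne' hab, log_div hb.ne' hab]
  ring

/-- Pointwise Jensen–Shannon inequality: for `a, b > 0`,
`a·log(a/(a+b)) + b·log(b/(a+b)) ≥ −(a+b)·log 2`, with equality iff `a = b`. -/
theorem stmt_13 (a b : ℝ) (ha : 0 < a) (hb : 0 < b) :
    -(a + b) * log 2 ≤ a * log (a / (a + b)) + b * log (b / (a + b)) ∧
    (a * log (a / (a + b)) + b * log (b / (a + b)) = -(a + b) * log 2 ↔ a = b) := by
  rw [mul_log_div_add_eq_mul_log_div_midpoint ha hb]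
  set m := (a + b) / 2 with hm
  have hm_pos : 0 < m := by positivity
  have h_a := sub_le_mul_log_div ha hm_pos
  have h_b := sub_le_mul_log_div hb hm_pos
  refine ⟨by linarith, fun h_eq => ?_, fun h_eq => ?_⟩
  · by_contra hne
    have := sub_lt_mul_log_div ha hm_pos (by contrapose! hne; linarith)
    linarith
  · subst h_eq
    have : a / m = 1 := by rw [hm, div_eq_one_iff_eq hm_pos.ne']; ring
    rw [this, log_one]
    ring
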